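/- arXiv:2601.18185 — 3 statements merged into one kernel-verified Lean document; each statement's English description precedes it below -/
import Mathlib

section
/- Let G be a countable group acting on a countable set V such that all point stabilizers are finite and the action has finitely many orbits. Then there exist functions |·|_G : G → ℝ_{≥0} and |·|_V : V → ℝ_{≥0} such that: (1) |gg'|_G ≤ |g|_G + |g'|_G for all g, g' ∈ G; (2) |g·v|_V ≤ |g|_G + |v|_V for all g ∈ G, v ∈ V; (3) for every n ∈ ℕ, the sets {g ∈ G : |g|_G ≤ n} and {v ∈ V : |v|_V ≤ n} are finite. -/
/-!
Enumerate `G` injectively in `ℕ` and give `g` the weight `e g + 1`. The least total weight of a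
word representing `g` is subadditive, and proper because a word of weight at most `n` uses at
most `n` letters from a finite alphabet. On `V`, fix a base point in each orbit and let the
length of `v` be the least length of a group element moving the base point of its orbit to `v`;
the triangle inequality for the action is inherited from subadditivity, and properness from
the finiteness of the set of orbits.
-/

theorem Set.Finite.setOf_list_length_le {α : Type*} {s : Set α} (hs : s.Finite) (n : ℕ) :
    {l : List α | l.length ≤ n ∧ ∀ x ∈ l, x ∈ s}.Finite := by
  have := hs.to_subtype
  refine ((List.finite_length_le s n).image (List.map (↑))).subset ?_
  rintro l ⟨hlen, hl⟩
  obtain ⟨l', rfl⟩ := (Set.range_list_map_coe s).ge hl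
  exact ⟨l', by simpa using hlen, rfl⟩

section WordLength

variable {G : Type*} [Group G]

noncomputable def wordLength (w : G → ℕ) (g : G) : ℕ :=
  sInf {n | ∃ l : List G, l.prod = g ∧ (l.map w).sum = n}

variable (w : G → ℕ)

theorem wordLength_prod_le (l : List G) : wordLength w l.prod ≤ (l.map w).sum :=
  Nat.sInf_le ⟨l, rfl, rfl⟩

theorem exists_prod_eq_and_sum_eq_wordLength (g : G) :
    ∃ l : List G, l.prod = g ∧ (l.map w).sum = wordLength w g :=
  Nat.sInf_mem (s := {n | ∃ l : List G, l.prod = g ∧ (l.map w).sum = n}) ⟨w g, [g], by simp, by simp⟩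

theorem wordLength_mul_le (g h : G) : wordLength w (g * h) ≤ wordLength w g + wordLength w h := by
  obtain ⟨l, rfl, hl⟩ := exists_prod_eq_and_sum_eq_wordLength w g
  obtain ⟨l', rfl, hl'⟩ := exists_prod_eq_and_sum_eq_wordLength w h
  simpa [← hl, ← hl'] using wordLength_prod_le w (l ++ l')

theorem finite_setOf_wordLength_le (hw : ∀ g, 1 ≤ w g) (hfin : ∀ n, {g | w g ≤ n}.Finite)
    (n : ℕ) : {g | wordLength w g ≤ n}.Finite := by
  refine (((hfin n).setOf_list_length_le n).image List.prod).subset ?_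
  intro g hg
  obtain ⟨l, rfl, hl⟩ := exists_prod_eq_and_sum_eq_wordLength w g
  have hsum : (l.map w).sum ≤ n := hl.trans_le hg
  refine ⟨l, ⟨?_, fun x hx => ?_⟩, rfl⟩
  · calc l.length = (l.map w).length := (List.length_map _).symm
      _ ≤ (l.map w).sum := List.length_le_sum_of_one_le _ (by simpa using fun x _ => hw x)
      _ ≤ n := hsum
  · exact (List.le_sum_of_mem (List.mem_map_of_mem hx)).trans hsum

end WordLength

section OrbitLength

open MulAction

variable {G V : Type*} [Group G] [MulAction G V]

noncomputable def orbitLength (ℓ : G → ℕ) (v : V) : ℕ :=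
  sInf {n | ∃ (g : G) (q : orbitRel.Quotient G V), g • q.out = v ∧ ℓ g = n}

variable (ℓ : G → ℕ)

theorem orbitLength_le {g : G} {q : orbitRel.Quotient G V} : orbitLength ℓ (g • q.out) ≤ ℓ g :=
  Nat.sInf_le ⟨g, q, rfl, rfl⟩

theorem exists_smul_out_eq_and_eq_orbitLength (v : V) :
    ∃ (g : G) (q : orbitRel.Quotient G V), g • q.out = v ∧ ℓ g = orbitLength ℓ v := by
  obtain ⟨g, hg⟩ := orbitRel_apply.mp ((orbitRel G V).symm (Quotient.mk_out' (s₁ := orbitRel G V) v))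
  exact Nat.sInf_mem (s := {n | ∃ (g : G) (q : orbitRel.Quotient G V), g • q.out = v ∧ ℓ g = n})
    ⟨ℓ g, g, _, hg, rfl⟩

theorem orbitLength_smul_le (hℓ : ∀ g h, ℓ (g * h) ≤ ℓ g + ℓ h) (g : G) (v : V) :
    orbitLength ℓ (g • v) ≤ ℓ g + orbitLength ℓ v := by
  obtain ⟨h, q, rfl, hh⟩ := exists_smul_out_eq_and_eq_orbitLength ℓ v
  calc orbitLength ℓ (g • h • q.out) = orbitLength ℓ ((g * h) • q.out) := by rw [mul_smul]
    _ ≤ ℓ (g * h) := orbitLength_le ℓ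
    _ ≤ ℓ g + orbitLength ℓ (h • q.out) := hh ▸ hℓ g h

theorem finite_setOf_orbitLength_le [Finite (orbitRel.Quotient G V)] {n : ℕ}
    (hℓ : {g | ℓ g ≤ n}.Finite) : {v : V | orbitLength ℓ v ≤ n}.Finite := by
  refine ((hℓ.prod Set.finite_univ).image
    fun p : G × orbitRel.Quotient G V => p.1 • p.2.out).subset ?_
  intro v hv
  obtain ⟨g, q, rfl, hg⟩ := exists_smul_out_eq_and_eq_orbitLength ℓ v
  exact ⟨(g, q), ⟨hg.trans_le hv, trivial⟩, rfl⟩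

end OrbitLength

theorem stmt4_general {G : Type*} [Group G] [Countable G] {V : Type*}
    [MulAction G V]
    (horb : Finite (Quotient (MulAction.orbitRel G V))) :
    ∃ (ℓG : G → ℝ) (ℓV : V → ℝ),
      (∀ g, 0 ≤ ℓG g) ∧ (∀ v, 0 ≤ ℓV v) ∧
      (∀ g g' : G, ℓG (g * g') ≤ ℓG g + ℓG g') ∧
      (∀ (g : G) (v : V), ℓV (g • v) ≤ ℓG g + ℓV v) ∧
      (∀ n : ℕ, {g : G | ℓG g ≤ n}.Finite ∧ {v : V | ℓV v ≤ n}.Finite) := by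
  obtain ⟨e, he⟩ := Countable.exists_injective_nat G
  set ℓ := wordLength fun g => e g + 1
  have hℓ_mul := wordLength_mul_le fun g => e g + 1
  have hℓ_finite : ∀ n : ℕ, {g | ℓ g ≤ n}.Finite :=
    finite_setOf_wordLength_le _ (fun _ => Nat.le_add_left 1 _) fun n =>
      ((Set.finite_Iic n).preimage he.injOn).subset fun _ hg => Nat.le_of_succ_le hg
  refine ⟨fun g => ℓ g, fun v => orbitLength ℓ v, fun _ => Nat.cast_nonneg _,
    fun _ => Nat.cast_nonneg _, fun g h => by dsimp only; exact_mod_cast hℓ_mul g h,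
    fun g v => by dsimp only; exact_mod_cast orbitLength_smul_le ℓ hℓ_mul g v, fun n => ?_⟩
  simp only [Nat.cast_le]
  exact ⟨hℓ_finite n, finite_setOf_orbitLength_le ℓ (hℓ_finite n)⟩

/-- For a countable group acting on a countable set with finite point stabilizers and
finitely many orbits, there exist compatible proper length functions on the group and
on the set. -/
theorem stmt4 {G : Type*} [Group G] [Countable G] {V : Type*} [Countable V]
    [MulAction G V]
    (hstab : ∀ v : V, {g : G | g • v = v}.Finite)
    (horb : Finite (Quotient (MulAction.orbitRel G V))) :
    ∃ (ℓG : G → ℝ) (ℓV : V → ℝ),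
      (∀ g, 0 ≤ ℓG g) ∧ (∀ v, 0 ≤ ℓV v) ∧
      (∀ g g' : G, ℓG (g * g') ≤ ℓG g + ℓG g') ∧
      (∀ (g : G) (v : V), ℓV (g • v) ≤ ℓG g + ℓV v) ∧
      (∀ n : ℕ, {g : G | ℓG g ≤ n}.Finite ∧ {v : V | ℓV v ≤ n}.Finite) :=
  stmt4_general horb
end

section
/- In the setting of the function m : H_Γ ⋊ G → ℓ¹(VΓ), for any z = (h, g) ∈ H_Γ ⋊ G and any k ∈ G, one has ‖m(kz) − k·m(z)‖₁ ≤ |k|_G · |supp(h)| and ‖m(zk) − m(z)‖₁ ≤ |k|_G · |supp(h)|, where k·μ denotes the pushforward of μ ∈ ℓ¹(VΓ) under the action of k on VΓ. -/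
namespace GWP

variable {V : Type*}

def GraphProduct (E : V → V → Prop) (H : V → Type*) [∀ v, Group (H v)] : Type _ :=
  Monoid.CoprodI H ⧸ Subgroup.normalClosure
    {x : Monoid.CoprodI H | ∃ (v w : V) (a : H v) (b : H w), E v w ∧
      x = Monoid.CoprodI.of a * Monoid.CoprodI.of b *
          (Monoid.CoprodI.of a)⁻¹ * (Monoid.CoprodI.of b)⁻¹}

instance (E : V → V → Prop) (H : V → Type*) [∀ v, Group (H v)] :
    Group (GraphProduct E H) :=
  QuotientGroup.Quotient.group _

def GraphProduct.of (E : V → V → Prop) (H : V → Type*) [∀ v, Group (H v)] (v : V) :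
    H v →* GraphProduct E H :=
  (QuotientGroup.mk' _).comp Monoid.CoprodI.of

/-- `l` is a presentation of `g` as a product of nontrivial syllables. -/
def GraphProduct.IsWord (E : V → V → Prop) (H : V → Type*) [∀ v, Group (H v)]
    (g : GraphProduct E H) (l : List (Σ v, H v)) : Prop :=
  (∀ s ∈ l, s.2 ≠ 1) ∧ g = (l.map (fun s => GraphProduct.of E H s.1 s.2)).prod

/-- Syllable length: the minimal length of a presentation. -/
noncomputable def GraphProduct.norm (E : V → V → Prop) (H : V → Type*) [∀ v, Group (H v)]
    (g : GraphProduct E H) : ℕ :=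
  sInf {n | ∃ l, GraphProduct.IsWord E H g l ∧ l.length = n}

def GraphProduct.IsNormalForm (E : V → V → Prop) (H : V → Type*) [∀ v, Group (H v)]
    (g : GraphProduct E H) (l : List (Σ v, H v)) : Prop :=
  GraphProduct.IsWord E H g l ∧ l.length = GraphProduct.norm E H g

def GraphProduct.supp (E : V → V → Prop) (H : V → Type*) [∀ v, Group (H v)]
    (g : GraphProduct E H) : Set V :=
  {v | ∃ l, GraphProduct.IsNormalForm E H g l ∧ v ∈ l.map Sigma.fst}

def Irreducible (E : V → V → Prop) (l : List V) : Prop :=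
  ∀ i j : Fin l.length, i < j → l.get i = l.get j →
    ∃ k : Fin l.length, i < k ∧ k < j ∧ ¬ E (l.get i) (l.get k)

end GWP

namespace GWP

variable {V : Type*} {H : Type*} [Group H] {G : Type*} [Group G] [MulAction G V]

/-- The value of `m((h,g)) = Σ_{v ∈ supp h} min{|v|_Γ, |g⁻¹v|_Γ} δ_v + Σ_i |h_i|_H δ_{v_i}`,
computed from a chosen presentation `l` of `h`. -/
noncomputable def mFun [DecidableEq V] (ℓH : H → ℝ) (ℓV : V → ℝ)
    (l : List (Σ _ : V, H)) (g : G) : V → ℝ :=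
  fun v =>
    (if v ∈ l.map Sigma.fst then min (ℓV v) (ℓV (g⁻¹ • v)) else 0) +
    (l.map (fun s => if s.1 = v then ℓH s.2 else 0)).sum

/-- The `ℓ¹`-norm of a (finitely supported) function on `VΓ`. -/
noncomputable def norm1 (f : V → ℝ) : ℝ := ∑' v, |f v|

end GWP

/-! Both differences are supported on the (translated) support of `h`, and the syllable parts of
`m` cancel: translating by `k` moves syllables together with their vertices, and right
multiplication does not touch `h`. What remains at a support vertex is a difference of two
minima whose arguments differ by at most `|k|_G`, since `v ↦ |v|_Γ` is `|·|_G`-Lipschitz along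
the action. -/

namespace GWP

variable {V : Type*}

theorem norm1_comp_smul {G : Type*} [Group G] [MulAction G V] (f : V → ℝ) (k : G) :
    norm1 (fun v => f (k • v)) = norm1 f :=
  (MulAction.toPerm k : Equiv.Perm V).tsum_eq fun v => |f v|

theorem norm1_ite_le [DecidableEq V] (s : List V) (f : V → ℝ) {C : ℝ}
    (hf : ∀ v ∈ s, |f v| ≤ C) :
    norm1 (fun v => if v ∈ s then f v else 0) ≤ C * s.toFinset.card := by
  have hsupp : ∀ v ∉ s.toFinset, |if v ∈ s then f v else 0| = 0 := fun v hv => by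
    rw [if_neg (List.mem_toFinset.not.1 hv), abs_zero]
  rw [norm1, tsum_eq_sum hsupp]
  calc ∑ v ∈ s.toFinset, |if v ∈ s then f v else 0|
      = ∑ v ∈ s.toFinset, |f v| :=
        Finset.sum_congr rfl fun v hv => by rw [if_pos (List.mem_toFinset.1 hv)]
    _ ≤ ∑ _v ∈ s.toFinset, C := Finset.sum_le_sum fun v hv => hf v (List.mem_toFinset.1 hv)
    _ = C * s.toFinset.card := by rw [Finset.sum_const, nsmul_eq_mul, mul_comm]

theorem abs_min_sub_min_left_le {a a' b C : ℝ} (h : |a - a'| ≤ C) :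
    |min a b - min a' b| ≤ C :=
  (abs_min_sub_min_le_max _ _ _ _).trans (max_le h (by simpa using (abs_nonneg _).trans h))

theorem abs_min_sub_min_right_le {a b b' C : ℝ} (h : |b - b'| ≤ C) :
    |min a b - min a b'| ≤ C := by
  simpa only [min_comm a] using abs_min_sub_min_left_le (b := a) h

theorem abs_length_smul_sub_le {G : Type*} [Group G] [MulAction G V]
    {ℓG : G → ℝ} {ℓV : V → ℝ} (hℓGinv : ∀ g : G, ℓG g⁻¹ = ℓG g)
    (hℓV : ∀ (g : G) (v : V), ℓV (g • v) ≤ ℓG g + ℓV v) (k : G) (v : V) :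
    |ℓV (k • v) - ℓV v| ≤ ℓG k := by
  have hback := hℓV k⁻¹ (k • v)
  rw [inv_smul_smul, hℓGinv] at hback
  exact abs_sub_le_iff.2 ⟨by linarith [hℓV k v], by linarith⟩

theorem mem_map_smul_fst_iff {H G : Type*} [Group G] [MulAction G V] (l : List (Σ _ : V, H))
    (k : G) (v : V) :
    k • v ∈ l.map (fun s => k • s.1) ↔ v ∈ l.map Sigma.fst := by
  simp only [List.mem_map, smul_left_cancel_iff]

section mFun

variable [DecidableEq V] {H : Type*} {G : Type*} [Group G] [MulAction G V]
  (ℓH : H → ℝ) (ℓV : V → ℝ) (l : List (Σ _ : V, H))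

theorem mFun_map_smul_sub (g k : G) (v : V) :
    mFun ℓH ℓV (l.map fun s => (⟨k • s.1, s.2⟩ : Σ _ : V, H)) (k * g) (k • v) -
        mFun ℓH ℓV l g v =
      if v ∈ l.map Sigma.fst then min (ℓV (k • v)) (ℓV (g⁻¹ • v)) - min (ℓV v) (ℓV (g⁻¹ • v))
      else 0 := by
  simp only [mFun, List.map_map, Function.comp_def, mem_map_smul_fst_iff, mul_inv_rev, mul_smul,
    inv_smul_smul, smul_left_cancel_iff]
  split_ifs <;> ring

theorem mFun_mul_sub (g k : G) (v : V) :
    mFun ℓH ℓV l (g * k) v - mFun ℓH ℓV l g v =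
      if v ∈ l.map Sigma.fst then min (ℓV v) (ℓV (k⁻¹ • g⁻¹ • v)) - min (ℓV v) (ℓV (g⁻¹ • v))
      else 0 := by
  simp only [mFun, mul_inv_rev, mul_smul]
  split_ifs <;> ring

end mFun

end GWP

open GWP GWP.GraphProduct in
theorem stmt13_general {V : Type*} [DecidableEq V]
    {H : Type*} {G : Type*} [Group G] [MulAction G V]
    (ℓG : G → ℝ) (ℓH : H → ℝ) (ℓV : V → ℝ)
    (hℓGinv : ∀ g : G, ℓG g⁻¹ = ℓG g)
    (hℓV : ∀ (g : G) (v : V), ℓV (g • v) ≤ ℓG g + ℓV v)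
    (g k : G)
    (l : List (Σ _ : V, H)) :
    norm1 (fun w =>
        mFun ℓH ℓV (l.map (fun s => (⟨k • s.1, s.2⟩ : Σ _ : V, H))) (k * g) w -
          mFun ℓH ℓV l g (k⁻¹ • w))
      ≤ ℓG k * (l.map Sigma.fst).toFinset.card ∧
    norm1 (fun w => mFun ℓH ℓV l (g * k) w - mFun ℓH ℓV l g w)
      ≤ ℓG k * (l.map Sigma.fst).toFinset.card := by
  have hlen := abs_length_smul_sub_le hℓGinv hℓV
  constructor
  · rw [← norm1_comp_smul _ k]
    simp only [inv_smul_smul, mFun_map_smul_sub]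
    exact norm1_ite_le _ _ fun v _ => abs_min_sub_min_left_le (hlen k v)
  · simp only [mFun_mul_sub]
    refine norm1_ite_le _ _ fun v _ => abs_min_sub_min_right_le ?_
    simpa only [hℓGinv] using hlen k⁻¹ (g⁻¹ • v)

open GWP GWP.GraphProduct in
/-- For `z = (h,g) ∈ H_Γ ⋊ G` and `k ∈ G`:
`‖m(kz) − k·m(z)‖₁ ≤ |k|_G · |supp h|` and `‖m(zk) − m(z)‖₁ ≤ |k|_G · |supp h|`.
Here `kz = (σ_k(h), kg)`, whose normal form is the `k`-translate of that of `h`,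
`zk = (h, gk)`, and `k·μ` is the pushforward of `μ` under `k`. -/
theorem stmt13 {V : Type*} [DecidableEq V] (E : V → V → Prop)
    {H : Type*} [Group H] {G : Type*} [Group G] [MulAction G V]
    (ℓG : G → ℝ) (ℓH : H → ℝ) (ℓV : V → ℝ)
    (hℓG0 : ∀ g : G, 0 ≤ ℓG g) (hℓGinv : ∀ g : G, ℓG g⁻¹ = ℓG g)
    (hℓGsub : ∀ g g' : G, ℓG (g * g') ≤ ℓG g + ℓG g')
    (hℓV : ∀ (g : G) (v : V), ℓV (g • v) ≤ ℓG g + ℓV v)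
    (h : GraphProduct E (fun _ : V => H)) (g k : G)
    (l : List (Σ _ : V, H)) (hl : IsNormalForm E (fun _ : V => H) h l) :
    norm1 (fun w =>
        mFun ℓH ℓV (l.map (fun s => (⟨k • s.1, s.2⟩ : Σ _ : V, H))) (k * g) w -
          mFun ℓH ℓV l g (k⁻¹ • w))
      ≤ ℓG k * (l.map Sigma.fst).toFinset.card ∧
    norm1 (fun w => mFun ℓH ℓV l (g * k) w - mFun ℓH ℓV l g w)
      ≤ ℓG k * (l.map Sigma.fst).toFinset.card :=
  stmt13_general ℓG ℓH ℓV hℓGinv hℓV g k l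
end

section
/- Let C > 0 and suppose z = (h, g) ∈ H_Γ ⋊ G satisfies |z|_f ≤ C·|supp(h)|, where |z|_f = ‖m(z)‖₁. Then |supp(h)| ≤ 4·|B(Γ, 2C)|, where B(Γ, R) = {v ∈ VΓ : |v|_Γ ≤ R}. -/
/-!
Split `supp h` into the points `v` with `min{|v|, |g⁻¹v|} ≤ 2C`, which lie in `B(2C) ∪ g·B(2C)`
and so number at most `2|B(2C)|`, and the remaining ones, each contributing more than `2C` to
`|z|_f`. Since `|z|_f ≤ C|supp h|`, the second kind can be at most half of `supp h`.
-/

namespace GWP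

section Counting

variable {V α G : Type*} [LinearOrder α] [Group G] [MulAction G V]

lemma card_filter_min_le_le_two_mul_ncard {ℓ : V → α} {R : α} (hB : {v | ℓ v ≤ R}.Finite)
    (g : G) (s : Finset V) :
    (s.filter fun v => min (ℓ v) (ℓ (g⁻¹ • v)) ≤ R).card ≤ 2 * {v | ℓ v ≤ R}.ncard := by
  classical
  have near_base : (s.filter fun v => ℓ v ≤ R).card ≤ {v | ℓ v ≤ R}.ncard := by
    rw [Set.ncard_eq_toFinset_card _ hB]
    exact Finset.card_le_card fun v hv => by simpa using (Finset.mem_filter.1 hv).2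
  have near_translate : (s.filter fun v => ℓ (g⁻¹ • v) ≤ R).card ≤ {v | ℓ v ≤ R}.ncard := by
    rw [Set.ncard_eq_toFinset_card _ hB]
    refine Finset.card_le_card_of_injOn (g⁻¹ • ·) (fun v hv => ?_) (MulAction.injective g⁻¹).injOn
    simpa using (Finset.mem_filter.1 hv).2
  calc (s.filter fun v => min (ℓ v) (ℓ (g⁻¹ • v)) ≤ R).card
      = (s.filter fun v => ℓ v ≤ R ∨ ℓ (g⁻¹ • v) ≤ R).card := by simp only [min_le_iff]
    _ ≤ (s.filter fun v => ℓ v ≤ R).card + (s.filter fun v => ℓ (g⁻¹ • v) ≤ R).card := by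
      rw [Finset.filter_or]; exact Finset.card_union_le _ _
    _ ≤ 2 * {v | ℓ v ≤ R}.ncard := by omega

end Counting

variable {V H G : Type*} [Group G] [MulAction G V]

lemma sum_abs_le_norm1 {f : V → ℝ} {s : Finset V} (hf : ∀ v ∉ s, f v = 0) (t : Finset V) :
    ∑ v ∈ t, |f v| ≤ norm1 f :=
  (summable_of_ne_finset_zero fun v hv => by rw [hf v hv, abs_zero]).sum_le_tsum t
    fun _ _ => abs_nonneg _

variable [DecidableEq V] {ℓH : H → ℝ} {ℓV : V → ℝ} {l : List (Σ _ : V, H)} {g : G} {v : V}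

lemma mFun_eq_zero_of_notMem (hv : v ∉ l.map Sigma.fst) : mFun ℓH ℓV l g v = 0 := by
  simp only [mFun, if_neg hv, zero_add]
  refine List.sum_eq_zero fun x hx => ?_
  obtain ⟨s, hs, rfl⟩ := List.mem_map.1 hx
  exact if_neg (by rintro rfl; exact hv (List.mem_map_of_mem hs))

lemma min_le_mFun (hℓH0 : ∀ x, 0 ≤ ℓH x) (hv : v ∈ l.map Sigma.fst) :
    min (ℓV v) (ℓV (g⁻¹ • v)) ≤ mFun ℓH ℓV l g v := by
  simp only [mFun, if_pos hv]
  refine le_add_of_nonneg_right (List.sum_nonneg fun x hx => ?_)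
  obtain ⟨s, -, rfl⟩ := List.mem_map.1 hx
  split_ifs
  exacts [hℓH0 _, le_rfl]

lemma mul_card_filter_not_min_le_le_norm1_mFun (hℓH0 : ∀ x, 0 ≤ ℓH x) (R : ℝ) :
    R * ((l.map Sigma.fst).toFinset.filter fun v => ¬ min (ℓV v) (ℓV (g⁻¹ • v)) ≤ R).card
      ≤ norm1 (mFun ℓH ℓV l g) := by
  set far := (l.map Sigma.fst).toFinset.filter fun v => ¬ min (ℓV v) (ℓV (g⁻¹ • v)) ≤ R
  calc R * far.card = ∑ _v ∈ far, R := by rw [Finset.sum_const, nsmul_eq_mul, mul_comm]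
    _ ≤ ∑ v ∈ far, |mFun ℓH ℓV l g v| := Finset.sum_le_sum fun v hv => by
        obtain ⟨hvl, hvR⟩ := Finset.mem_filter.1 hv
        exact (not_le.1 hvR).le.trans <|
          (min_le_mFun hℓH0 (List.mem_toFinset.1 hvl)).trans (le_abs_self _)
    _ ≤ norm1 (mFun ℓH ℓV l g) :=
        sum_abs_le_norm1 (s := (l.map Sigma.fst).toFinset)
          (fun v hv => mFun_eq_zero_of_notMem (by simpa using hv)) far

end GWP

open GWP GWP.GraphProduct in
theorem stmt14_general {V : Type*} [DecidableEq V]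
    {H : Type*} [Group H] {G : Type*} [Group G] [MulAction G V]
    (ℓH : H → ℝ) (ℓV : V → ℝ)
    (hℓH0 : ∀ x : H, 0 ≤ ℓH x)
    (hball : ∀ R : ℝ, {v : V | ℓV v ≤ R}.Finite)
    (C : ℝ) (hC : 0 < C)
    (g : G)
    (l : List (Σ _ : V, H))
    (hle : norm1 (mFun ℓH ℓV l g : V → ℝ)
      ≤ C * (l.map Sigma.fst).toFinset.card) :
    ((l.map Sigma.fst).toFinset.card : ℝ)
      ≤ 4 * ({v : V | ℓV v ≤ 2 * C}.ncard : ℝ) := by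
  set S := (l.map Sigma.fst).toFinset
  set near := S.filter fun v => min (ℓV v) (ℓV (g⁻¹ • v)) ≤ 2 * C
  set far := S.filter fun v => ¬ min (ℓV v) (ℓV (g⁻¹ • v)) ≤ 2 * C
  have hsplit : (S.card : ℝ) = near.card + far.card := by
    exact_mod_cast (S.card_filter_add_card_filter_not _).symm
  have hnear : (near.card : ℝ) ≤ 2 * {v | ℓV v ≤ 2 * C}.ncard := by
    exact_mod_cast card_filter_min_le_le_two_mul_ncard (hball (2 * C)) g S
  have hfar : 2 * C * far.card ≤ C * S.card :=
    (mul_card_filter_not_min_le_le_norm1_mFun hℓH0 (2 * C)).trans hle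
  have far_le_near : (far.card : ℝ) ≤ near.card :=
    le_of_mul_le_mul_left (by rw [hsplit] at hfar; linarith) hC
  linarith

open GWP GWP.GraphProduct in
/-- If `z = (h,g)` satisfies `|z|_f ≤ C · |supp h|`, then
`|supp h| ≤ 4 · |B(Γ, 2C)|` where `B(Γ,R) = {v : |v|_Γ ≤ R}`. -/
theorem stmt14 {V : Type*} [DecidableEq V] (E : V → V → Prop)
    {H : Type*} [Group H] {G : Type*} [Group G] [MulAction G V]
    (ℓH : H → ℝ) (ℓV : V → ℝ)
    (hℓH0 : ∀ x : H, 0 ≤ ℓH x) (hℓV0 : ∀ v : V, 0 ≤ ℓV v)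
    (hball : ∀ R : ℝ, {v : V | ℓV v ≤ R}.Finite)
    (C : ℝ) (hC : 0 < C)
    (h : GraphProduct E (fun _ : V => H)) (g : G)
    (l : List (Σ _ : V, H)) (hl : IsNormalForm E (fun _ : V => H) h l)
    (hle : norm1 (mFun ℓH ℓV l g : V → ℝ)
      ≤ C * (l.map Sigma.fst).toFinset.card) :
    ((l.map Sigma.fst).toFinset.card : ℝ)
      ≤ 4 * ({v : V | ℓV v ≤ 2 * C}.ncard : ℝ) :=
  stmt14_general ℓH ℓV hℓH0 hball C hC g l hle
end
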